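/- arXiv:1203.1867 — 4 statements merged into one kernel-verified Lean document; each statement's English description precedes it below -/
import Mathlib

section
/- (Uniform form of the combinatorial lemma.) In the setting of the jump data and the matrix θ: for every 1 ≤ ρ ≤ e, one has ı_ρ + 1 = Σ'_μ (θ_{μ,ρ} + 1), where the sum Σ'_μ runs over all μ with 1 ≤ μ ≤ N such that θ_{μ,ρ} ≠ 0. -/
/-!
Split the columns `μ` of `θ` into the first one and the blocks `d (i-1) < μ ≤ d i`, one block
of `q (r i)` columns per essential index `r i`. In a block, row `ρ` vanishes for `ρ < r i`, while
for `ρ ≥ r i` the recursion `θ ↦ p θ + (p-1)` started at `0` gives `θ μ ρ + 1 = p ^ (ρ - r i + 1)`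
in every column. Hence the right-hand side is `θ 1 ρ + 1 + ∑_{σ ≤ ρ} q σ p ^ (ρ - σ + 1)`, and
unrolling `u ρ = p u (ρ-1) + p q ρ + ε ρ` against `θ 1 ρ = p θ 1 (ρ-1) + ε ρ` shows that this is
`u ρ + 1`. The first column must be counted: `θ 1 ρ > 0` because `ε 1 > 0`, as `p ∤ u 1`.
-/

open Finset

section Increments

variable {d c : ℕ → ℕ} {n : ℕ}

theorem eq_add_sum_Icc_of_forall_eq_add (hd : ∀ i ∈ Icc 1 n, d i = d (i - 1) + c i) :
    d n = d 0 + ∑ i ∈ Icc 1 n, c i := by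
  induction n with
  | zero => simp
  | succ n ih =>
    rw [sum_Icc_succ_top (by omega), hd (n + 1) (by simp), Nat.add_sub_cancel,
      ih fun i hi => hd i (Icc_subset_Icc_right n.le_succ hi), add_assoc]

theorem monotoneOn_Iic_of_forall_eq_add (hd : ∀ i ∈ Icc 1 n, d i = d (i - 1) + c i) :
    MonotoneOn d (Set.Iic n) := by
  intro i hi j hj hij
  have hd' : ∀ k ≤ n, d k = d 0 + ∑ l ∈ Icc 1 k, c l := fun k hk =>
    eq_add_sum_Icc_of_forall_eq_add fun l hl => hd l (Icc_subset_Icc_right hk hl)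
  rw [hd' i hi, hd' j hj]
  exact Nat.add_le_add_left (sum_le_sum_of_subset (Icc_subset_Icc_right hij)) _

end Increments

theorem sum_Ioc_eq_sum_Icc_sum_Ioc_of_monotoneOn {M : Type*} [AddCommMonoid M] {d : ℕ → ℕ}
    {n : ℕ} (hd : MonotoneOn d (Set.Iic n)) (f : ℕ → M) :
    ∑ x ∈ Ioc (d 0) (d n), f x = ∑ i ∈ Icc 1 n, ∑ x ∈ Ioc (d (i - 1)) (d i), f x := by
  induction n with
  | zero => simp
  | succ n ih =>
    rw [sum_Icc_succ_top (by omega), Nat.add_sub_cancel,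
      ← ih (hd.mono (Set.Iic_subset_Iic.mpr n.le_succ)),
      sum_Ioc_consecutive f
        (hd (Set.mem_Iic.mpr (by omega)) (Set.mem_Iic.mpr (by omega)) n.zero_le)
        (hd (Set.mem_Iic.mpr (by omega)) (Set.mem_Iic.mpr le_rfl) n.le_succ)]

theorem Ioc_subset_Ioc_of_monotoneOn {d : ℕ → ℕ} {n i : ℕ} (hd : MonotoneOn d (Set.Iic n))
    (hi : i ∈ Icc 1 n) : Ioc (d (i - 1)) (d i) ⊆ Ioc (d 0) (d n) := by
  obtain ⟨-, hin⟩ := mem_Icc.mp hi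
  exact Ioc_subset_Ioc
    (hd (Set.mem_Iic.mpr (Nat.zero_le _)) (Set.mem_Iic.mpr (by omega)) (Nat.zero_le _))
    (hd (Set.mem_Iic.mpr hin) (Set.mem_Iic.mpr le_rfl) hin)

theorem eq_add_sum_mul_pow_of_forall_eq {p n : ℕ} {a b c s : ℕ → ℕ} (h0 : a 0 = b 0)
    (ha : ∀ t ∈ Icc 1 n, a t = p * a (t - 1) + p * c t + s t)
    (hb : ∀ t ∈ Icc 1 n, b t = p * b (t - 1) + s t) :
    ∀ t ≤ n, a t = b t + ∑ σ ∈ Icc 1 t, c σ * p ^ (t - σ + 1) := by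
  intro t ht
  induction t with
  | zero => simpa using h0
  | succ t ih =>
    have hmem : t + 1 ∈ Icc 1 n := mem_Icc.mpr ⟨by omega, ht⟩
    have hshift : ∑ σ ∈ Icc 1 t, c σ * p ^ (t + 1 - σ + 1)
        = p * ∑ σ ∈ Icc 1 t, c σ * p ^ (t - σ + 1) := by
      rw [mul_sum]
      refine sum_congr rfl fun σ hσ => ?_
      rw [show t + 1 - σ + 1 = (t - σ + 1) + 1 by have := (mem_Icc.mp hσ).2; omega, pow_succ]
      ring
    rw [ha _ hmem, hb _ hmem, Nat.add_sub_cancel, ih (by omega), sum_Icc_succ_top (by omega),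
      hshift, Nat.sub_self]
    ring

theorem add_one_eq_pow_of_forall_eq_mul_add_pred {p a n : ℕ} {x : ℕ → ℕ} (hp : 1 ≤ p)
    (hprev : x (a - 1) = 0) (hx : ∀ j, a ≤ j → j ≤ n → x j = p * x (j - 1) + (p - 1)) :
    ∀ j, a ≤ j → j ≤ n → x j + 1 = p ^ (j - a + 1) := by
  intro j haj
  induction j, haj using Nat.le_induction with
  | base =>
    intro han
    rw [hx a le_rfl han, hprev, Nat.sub_self, zero_add, pow_one]
    omega
  | succ j haj ih =>
    intro hjn
    rw [hx (j + 1) (by omega) hjn, Nat.add_sub_cancel,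
      show j + 1 - a + 1 = (j - a + 1) + 1 by omega, pow_succ, ← ih (by omega)]
    have : p * x j + (p - 1) + 1 = p * (x j + 1) := by rw [mul_add_one]; omega
    rw [this, mul_comm]

theorem pos_of_forall_mul_le {p n : ℕ} {x : ℕ → ℕ} (hp : 0 < p) (h1 : 0 < x 1)
    (hx : ∀ j ∈ Icc 1 n, p * x (j - 1) ≤ x j) : ∀ j ∈ Icc 1 n, 0 < x j := by
  intro j hj
  obtain ⟨h1j, hjn⟩ := mem_Icc.mp hj
  induction j, h1j using Nat.le_induction with
  | base => exact h1
  | succ j h1j ih =>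
    have := hx (j + 1) (mem_Icc.mpr ⟨by omega, hjn⟩)
    rw [Nat.add_sub_cancel] at this
    exact lt_of_lt_of_le (Nat.mul_pos hp (ih (mem_Icc.mpr ⟨h1j, by omega⟩) (by omega))) this

theorem sum_comp_eq_sum_of_enumerates_support {M : Type*} [AddCommMonoid M] {e e₀ : ℕ}
    {q r : ℕ → ℕ}
    (hr : StrictMonoOn r (Set.Icc 1 e₀))
    (hess : ∀ ρ, (ρ ∈ Icc 1 e ∧ 0 < q ρ) ↔ ∃ i ∈ Icc 1 e₀, r i = ρ)
    {f : ℕ → M} (hf : ∀ σ, q σ = 0 → f σ = 0) :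
    ∑ i ∈ Icc 1 e₀, f (r i) = ∑ σ ∈ Icc 1 e, f σ := by
  refine sum_of_injOn r (fun i hi j hj => hr.injOn (by simpa using hi) (by simpa using hj))
    (fun i hi => ((hess (r i)).mpr ⟨i, hi, rfl⟩).1) (fun σ hσ hnot => hf σ ?_) fun _ _ => rfl
  by_contra hq
  obtain ⟨i, hi, rfl⟩ := (hess σ).mp ⟨hσ, Nat.pos_of_ne_zero hq⟩
  exact hnot ⟨i, hi, rfl⟩

theorem theta_one_pos {p e : ℕ} {u q ε x : ℕ → ℕ} (hp : 0 < p) (hu0 : u 0 = 0)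
    (hupos : ∀ ρ ∈ Icc 1 e, 1 ≤ u ρ)
    (hult : ∀ ρ ∈ Icc 1 e, (p * u (ρ - 1) < u ρ ↔ ¬ p ∣ u ρ))
    (hqε : ∀ ρ ∈ Icc 1 e, u ρ = p * u (ρ - 1) + p * q ρ + ε ρ)
    (hx0 : x 0 = 0) (hx : ∀ ρ ∈ Icc 1 e, x ρ = p * x (ρ - 1) + ε ρ) :
    ∀ ρ ∈ Icc 1 e, 0 < x ρ := by
  intro ρ hρ
  have h1 : 1 ∈ Icc 1 e := mem_Icc.mpr ⟨le_rfl, (mem_Icc.mp hρ).1.trans (mem_Icc.mp hρ).2⟩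
  have hε1 : 0 < ε 1 := by
    have hndvd := (hult 1 h1).mp (by rw [Nat.sub_self, hu0, mul_zero]; exact hupos 1 h1)
    have hu1 := hqε 1 h1
    simp only [Nat.sub_self, hu0, mul_zero, zero_add] at hu1
    exact Nat.pos_of_ne_zero fun h0 => hndvd ⟨q 1, by rw [hu1, h0, add_zero]⟩
  refine pos_of_forall_mul_le hp ?_ (fun j hj => (hx j hj).ge.trans' (Nat.le_add_right _ _)) ρ hρ
  rw [hx 1 h1, Nat.sub_self, hx0, mul_zero, zero_add]
  exact hε1

theorem sum_filter_ne_zero_of_block {p e ρ a b s : ℕ} {θ : ℕ → ℕ → ℕ} (hp : 2 ≤ p)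
    (hρ : ρ ∈ Icc 1 e) (h0 : ∀ μ ∈ Ioc a b, θ μ 0 = 0)
    (hlow : ∀ μ, a < μ → μ ≤ b → ∀ ρ, 1 ≤ ρ → ρ < s → θ μ ρ = 0)
    (hhigh : ∀ μ, a < μ → μ ≤ b → ∀ ρ, s ≤ ρ → ρ ≤ e → θ μ ρ = p * θ μ (ρ - 1) + (p - 1)) :
    ∑ μ ∈ Ioc a b with θ μ ρ ≠ 0, (θ μ ρ + 1) =
      if s ≤ ρ then (b - a) * p ^ (ρ - s + 1) else 0 := by
  obtain ⟨hρ1, hρe⟩ := mem_Icc.mp hρ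
  split_ifs with hsρ
  · have hval : ∀ μ ∈ Ioc a b, θ μ ρ + 1 = p ^ (ρ - s + 1) := by
      intro μ hμ
      obtain ⟨haμ, hμb⟩ := mem_Ioc.mp hμ
      have hprev : θ μ (s - 1) = 0 := by
        rcases Nat.eq_zero_or_pos (s - 1) with hs | hs
        · rw [hs]; exact h0 μ hμ
        · exact hlow μ haμ hμb (s - 1) hs (by omega)
      exact add_one_eq_pow_of_forall_eq_mul_add_pred (by omega) hprev (hhigh μ haμ hμb) ρ hsρ hρe
    have hne : ∀ μ ∈ Ioc a b, θ μ ρ ≠ 0 := fun μ hμ h => by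
      have := hval μ hμ
      rw [h, zero_add] at this
      exact absurd this.symm (Nat.one_lt_pow (by omega) (by omega)).ne'
    rw [filter_true_of_mem hne, sum_congr rfl hval, sum_const, smul_eq_mul, Nat.card_Ioc]
  · refine sum_eq_zero fun μ hμ => ?_
    obtain ⟨hμ, hne⟩ := mem_filter.mp hμ
    obtain ⟨haμ, hμb⟩ := mem_Ioc.mp hμ
    exact absurd (hlow μ haμ hμb ρ hρ1 (by omega)) hne

theorem theta_combinatorial_lemma_uniform_general
    (p e e₀ N : ℕ) (hp : p.Prime)
    (u q ε r d : ℕ → ℕ) (θ : ℕ → ℕ → ℕ)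
    (hu0 : u 0 = 0)
    (hupos : ∀ ρ ∈ Finset.Icc 1 e, 1 ≤ u ρ)
    (hult : ∀ ρ ∈ Finset.Icc 1 e, (p * u (ρ - 1) < u ρ ↔ ¬ p ∣ u ρ))
    (hqε : ∀ ρ ∈ Finset.Icc 1 e, u ρ = p * u (ρ - 1) + p * q ρ + ε ρ)
    (hrmono : StrictMonoOn r (Set.Icc 1 e₀))
    (hress : ∀ ρ, (ρ ∈ Finset.Icc 1 e ∧ 0 < q ρ) ↔ ∃ i ∈ Finset.Icc 1 e₀, r i = ρ)
    (hd0 : d 0 = 1)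
    (hd : ∀ i ∈ Finset.Icc 1 e₀, d i = d (i - 1) + q (r i))
    (hN : N = 1 + ∑ ρ ∈ Finset.Icc 1 e, q ρ)
    (hθ0 : ∀ μ ∈ Finset.Icc 1 N, θ μ 0 = 0)
    (hθ1 : ∀ ρ ∈ Finset.Icc 1 e, θ 1 ρ = p * θ 1 (ρ - 1) + ε ρ)
    (hθlow : ∀ i ∈ Finset.Icc 1 e₀, ∀ μ, d (i - 1) < μ → μ ≤ d i →
      ∀ ρ, 1 ≤ ρ → ρ < r i → θ μ ρ = 0)
    (hθhigh : ∀ i ∈ Finset.Icc 1 e₀, ∀ μ, d (i - 1) < μ → μ ≤ d i →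
      ∀ ρ, r i ≤ ρ → ρ ≤ e → θ μ ρ = p * θ μ (ρ - 1) + (p - 1)) :
    ∀ ρ ∈ Finset.Icc 1 e,
      u ρ + 1 = ∑ μ ∈ (Finset.Icc 1 N).filter (fun μ => θ μ ρ ≠ 0), (θ μ ρ + 1) := by
  intro ρ hρ
  obtain ⟨hρ1, hρe⟩ := mem_Icc.mp hρ
  have hdmono := monotoneOn_Iic_of_forall_eq_add hd
  have hdN : d e₀ = N := by
    rw [eq_add_sum_Icc_of_forall_eq_add hd, hd0, hN,
      sum_comp_eq_sum_of_enumerates_support hrmono hress fun _ h => h]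
  have hθ10 : θ 1 0 = 0 := hθ0 1 (by simp [hN])
  have hθ1ρ : 0 < θ 1 ρ := theta_one_pos hp.pos hu0 hupos hult hqε hθ10 hθ1 ρ hρ
  have hblock (i : ℕ) (hi : i ∈ Icc 1 e₀) :
      ∑ μ ∈ Ioc (d (i - 1)) (d i) with θ μ ρ ≠ 0, (θ μ ρ + 1)
        = if r i ≤ ρ then q (r i) * p ^ (ρ - r i + 1) else 0 := by
    have hsub := (Ioc_subset_Ioc_of_monotoneOn hdmono hi).trans Ioc_subset_Icc_self
    rw [hd0, hdN] at hsub
    rw [sum_filter_ne_zero_of_block hp.two_le hρ (fun μ hμ => hθ0 μ (hsub hμ)) (hθlow i hi)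
      (hθhigh i hi), hd i hi, Nat.add_sub_cancel_left]
  calc u ρ + 1
      = θ 1 ρ + 1 + ∑ σ ∈ Icc 1 ρ, q σ * p ^ (ρ - σ + 1) := by
        rw [eq_add_sum_mul_pow_of_forall_eq (hu0.trans hθ10.symm) hqε hθ1 ρ hρe]
        ring
    _ = θ 1 ρ + 1 + ∑ i ∈ Icc 1 e₀, if r i ≤ ρ then q (r i) * p ^ (ρ - r i + 1) else 0 := by
        rw [sum_comp_eq_sum_of_enumerates_support hrmono hress
          (f := fun σ => if σ ≤ ρ then q σ * p ^ (ρ - σ + 1) else 0) fun σ hσ => by simp [hσ],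
          ← sum_filter]
        congr 2
        ext σ
        simp only [mem_Icc, mem_filter]
        omega
    _ = θ 1 ρ + 1 + ∑ μ ∈ Ioc (d 0) (d e₀) with θ μ ρ ≠ 0, (θ μ ρ + 1) := by
        rw [sum_filter, sum_Ioc_eq_sum_Icc_sum_Ioc_of_monotoneOn hdmono, ← sum_congr rfl hblock]
        simp only [sum_filter]
    _ = ∑ μ ∈ Icc 1 N with θ μ ρ ≠ 0, (θ μ ρ + 1) := by
        rw [hd0, hdN, Icc_eq_cons_Ioc (by omega : 1 ≤ N),
          filter_cons_of_pos (fun μ => θ μ ρ ≠ 0) 1 _ _ hθ1ρ.ne', sum_cons, add_comm]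

/-- **Uniform form of the combinatorial lemma.** For every `1 ≤ ρ ≤ e`, one has
`u ρ + 1 = Σ'_μ (θ μ ρ + 1)`, the sum running over all `1 ≤ μ ≤ N` with `θ μ ρ ≠ 0`. -/
theorem theta_combinatorial_lemma_uniform
    (p e e₀ N : ℕ) (hp : p.Prime) (he : 1 ≤ e)
    (u q ε r d : ℕ → ℕ) (θ : ℕ → ℕ → ℕ)
    (hu0 : u 0 = 0)
    (hupos : ∀ ρ ∈ Finset.Icc 1 e, 1 ≤ u ρ)
    (hule : ∀ ρ ∈ Finset.Icc 1 e, p * u (ρ - 1) ≤ u ρ)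
    (hult : ∀ ρ ∈ Finset.Icc 1 e, (p * u (ρ - 1) < u ρ ↔ ¬ p ∣ u ρ))
    (hqε : ∀ ρ ∈ Finset.Icc 1 e, u ρ = p * u (ρ - 1) + p * q ρ + ε ρ)
    (hε : ∀ ρ ∈ Finset.Icc 1 e, ε ρ < p)
    (hrmono : StrictMonoOn r (Set.Icc 1 e₀))
    (hress : ∀ ρ, (ρ ∈ Finset.Icc 1 e ∧ 0 < q ρ) ↔ ∃ i ∈ Finset.Icc 1 e₀, r i = ρ)
    (hrtop : r (e₀ + 1) = e + 1)
    (hd0 : d 0 = 1)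
    (hd : ∀ i ∈ Finset.Icc 1 e₀, d i = d (i - 1) + q (r i))
    (hN : N = 1 + ∑ ρ ∈ Finset.Icc 1 e, q ρ)
    (hθ0 : ∀ μ ∈ Finset.Icc 1 N, θ μ 0 = 0)
    (hθ1 : ∀ ρ ∈ Finset.Icc 1 e, θ 1 ρ = p * θ 1 (ρ - 1) + ε ρ)
    (hθlow : ∀ i ∈ Finset.Icc 1 e₀, ∀ μ, d (i - 1) < μ → μ ≤ d i →
      ∀ ρ, 1 ≤ ρ → ρ < r i → θ μ ρ = 0)
    (hθhigh : ∀ i ∈ Finset.Icc 1 e₀, ∀ μ, d (i - 1) < μ → μ ≤ d i →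
      ∀ ρ, r i ≤ ρ → ρ ≤ e → θ μ ρ = p * θ μ (ρ - 1) + (p - 1)) :
    ∀ ρ ∈ Finset.Icc 1 e,
      u ρ + 1 = ∑ μ ∈ (Finset.Icc 1 N).filter (fun μ => θ μ ρ ≠ 0), (θ μ ρ + 1) :=
  theta_combinatorial_lemma_uniform_general p e e₀ N hp u q ε r d θ hu0 hupos hult hqε hrmono hress
    hd0 hd hN hθ0 hθ1 hθlow hθhigh
end

section
/- (Support of the matrix θ.) In the setting of the jump data and the matrix θ, suppose e₀ > 0. Let 1 ≤ ρ ≤ e and let i with 1 ≤ i ≤ e₀ be the unique index such that r_i ≤ ρ < r_{i+1} (assuming r_1 ≤ ρ). Then for every μ with 1 ≤ μ ≤ N one has: θ_{μ,ρ} ≠ 0 if and only if μ ≤ d_i. Moreover, for ρ < r_1 one has θ_{μ,ρ} ≠ 0 if and only if μ = 1. -/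
/-!
The first row is positive: `ε 1 ≠ 0` because `u 1 > p * u 0 = 0` forces `p ∤ u 1`, and the
recursion `θ 1 ρ = p * θ 1 (ρ - 1) + ε ρ` propagates positivity. The remaining rows fall into
the blocks `d (j - 1) < μ ≤ d j`, which exhaust `1 < μ ≤ N` since `d e₀ = N`. Row `μ` of block `j`
vanishes exactly before column `r j` (after it, `θ μ ρ ≥ p - 1 > 0`), so by monotonicity of `r`
and `d` it is nonzero at `ρ ∈ [r i, r (i + 1))` iff `j ≤ i` iff `μ ≤ d i`.
-/

open Finset

lemma exists_mem_Icc_pred_lt_le {α : Type*} [LinearOrder α] {d : ℕ → α} {x : α} {n : ℕ}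
    (h0 : d 0 < x) (hn : x ≤ d n) : ∃ j ∈ Icc 1 n, d (j - 1) < x ∧ x ≤ d j := by
  induction n with
  | zero => exact absurd hn (not_le.mpr h0)
  | succ n ih =>
    by_cases hx : x ≤ d n
    · obtain ⟨j, hj, hlt, hle⟩ := ih hx
      exact ⟨j, Icc_subset_Icc_right n.le_succ hj, hlt, hle⟩
    · exact ⟨n + 1, by simp, by simpa using hx, hn⟩

lemma eq_add_sum_Icc_of_eq_pred_add {M : Type*} [AddCommMonoid M] {d a : ℕ → M} {n : ℕ}
    (hd : ∀ i ∈ Icc 1 n, d i = d (i - 1) + a i) : ∀ k ≤ n, d k = d 0 + ∑ i ∈ Icc 1 k, a i := by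
  intro k hk
  induction k with
  | zero => simp
  | succ k ih =>
    rw [hd (k + 1) (by simp; omega), Nat.add_sub_cancel, ih (by omega),
      sum_Icc_succ_top (by omega), add_assoc]

lemma monotoneOn_Iic_of_eq_pred_add {M : Type*} [AddCommMonoid M] [PartialOrder M]
    [CanonicallyOrderedAdd M] {d a : ℕ → M} {n : ℕ}
    (hd : ∀ i ∈ Icc 1 n, d i = d (i - 1) + a i) : MonotoneOn d (Set.Iic n) :=
  monotoneOn_of_le_add_one Set.ordConnected_Iic fun k _ _ hk => by
    rw [hd (k + 1) (by simpa using hk), Nat.add_sub_cancel]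
    exact le_self_add

lemma sum_comp_eq_sum_of_injOn_of_support {ι κ M : Type*} [AddCommMonoid M] {s : Finset ι}
    {t : Finset κ} {f : κ → M} {r : ι → κ} (hr : Set.InjOn r s)
    (hsupp : ∀ k, (k ∈ t ∧ f k ≠ 0) ↔ ∃ i ∈ s, r i = k) :
    ∑ i ∈ s, f (r i) = ∑ k ∈ t, f k := by
  classical
  rw [← sum_image hr, ← sum_filter_ne_zero t]
  congr 1
  ext k
  rw [mem_image, mem_filter, hsupp]

lemma pos_of_eq_mul_add_of_lt_iff_not_dvd {p u₀ u₁ q ε : ℕ} (hu₀ : u₀ = 0) (hu₁ : 1 ≤ u₁)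
    (hu : p * u₀ < u₁ ↔ ¬ p ∣ u₁) (hqε : u₁ = p * u₀ + p * q + ε) : 0 < ε := by
  subst hu₀
  rw [mul_zero, zero_add] at hqε
  refine Nat.pos_of_ne_zero fun hε => hu.mp hu₁ ⟨q, ?_⟩
  rw [hqε, hε, add_zero]

lemma pos_of_eq_mul_pred_add {p e : ℕ} {f ε : ℕ → ℕ} (hp : 0 < p) (hε : 0 < ε 1)
    (hf : ∀ ρ ∈ Icc 1 e, f ρ = p * f (ρ - 1) + ε ρ) : ∀ ρ ∈ Icc 1 e, 0 < f ρ := by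
  intro ρ hρ
  obtain ⟨h1, he⟩ := mem_Icc.mp hρ
  induction ρ, h1 using Nat.le_induction with
  | base => rw [hf 1 hρ]; omega
  | succ ρ h1 ih =>
    rw [hf (ρ + 1) hρ, Nat.add_sub_cancel]
    have := Nat.mul_pos hp (ih (mem_Icc.mpr ⟨h1, by omega⟩) (by omega))
    omega

lemma ne_zero_iff_le_of_eq_zero_of_eq_mul_pred_add {p e r : ℕ} {f : ℕ → ℕ} (hp : 1 < p)
    (hlow : ∀ ρ, 1 ≤ ρ → ρ < r → f ρ = 0)
    (hhigh : ∀ ρ, r ≤ ρ → ρ ≤ e → f ρ = p * f (ρ - 1) + (p - 1))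
    {ρ : ℕ} (hρ : ρ ∈ Icc 1 e) : f ρ ≠ 0 ↔ r ≤ ρ := by
  obtain ⟨h1, he⟩ := mem_Icc.mp hρ
  by_cases hr : r ≤ ρ
  · rw [hhigh ρ hr he]
    omega
  · simp [hr, hlow ρ h1 (not_le.mp hr)]

lemma MonotoneOn.le_iff_le_of_le_of_lt {α : Type*} [LinearOrder α] {r : ℕ → α} {n i j : ℕ}
    {x : α} (hr : MonotoneOn r (Set.Icc 1 n)) (hi : i ∈ Set.Icc 1 n) (hj : j ∈ Set.Icc 1 n)
    (hix : r i ≤ x) (hxi : x < r (i + 1)) : r j ≤ x ↔ j ≤ i := by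
  refine ⟨fun hjx => ?_, fun hji => (hr hj hi hji).trans hix⟩
  by_contra! hij
  have := hr ⟨by omega, hij.trans_le hj.2⟩ hj hij
  exact absurd (this.trans hjx) (not_le.mpr hxi)

lemma MonotoneOn.le_iff_le_of_pred_lt_of_le {α : Type*} [LinearOrder α] {d : ℕ → α}
    {n i j : ℕ} {x : α} (hd : MonotoneOn d (Set.Iic n)) (hi : i ≤ n) (hj : j ≤ n)
    (hjx : d (j - 1) < x) (hxj : x ≤ d j) : x ≤ d i ↔ j ≤ i := by
  refine ⟨fun hxi => ?_, fun hji => hxj.trans (hd hj hi hji)⟩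
  by_contra! hij
  have := hd (Set.mem_Iic.mpr hi) (Set.mem_Iic.mpr (by omega)) (Nat.le_sub_one_of_lt hij)
  exact absurd (hxi.trans this) (not_le.mpr hjx)

theorem theta_support_general
    (p e e₀ N : ℕ) (hp : p.Prime)
    (u q ε r d : ℕ → ℕ) (θ : ℕ → ℕ → ℕ)
    (hu0 : u 0 = 0)
    (hupos : ∀ ρ ∈ Finset.Icc 1 e, 1 ≤ u ρ)
    (hult : ∀ ρ ∈ Finset.Icc 1 e, (p * u (ρ - 1) < u ρ ↔ ¬ p ∣ u ρ))
    (hqε : ∀ ρ ∈ Finset.Icc 1 e, u ρ = p * u (ρ - 1) + p * q ρ + ε ρ)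
    (hrmono : StrictMonoOn r (Set.Icc 1 e₀))
    (hress : ∀ ρ, (ρ ∈ Finset.Icc 1 e ∧ 0 < q ρ) ↔ ∃ i ∈ Finset.Icc 1 e₀, r i = ρ)
    (hd0 : d 0 = 1)
    (hd : ∀ i ∈ Finset.Icc 1 e₀, d i = d (i - 1) + q (r i))
    (hN : N = 1 + ∑ ρ ∈ Finset.Icc 1 e, q ρ)
    (hθ1 : ∀ ρ ∈ Finset.Icc 1 e, θ 1 ρ = p * θ 1 (ρ - 1) + ε ρ)
    (hθlow : ∀ i ∈ Finset.Icc 1 e₀, ∀ μ, d (i - 1) < μ → μ ≤ d i →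
      ∀ ρ, 1 ≤ ρ → ρ < r i → θ μ ρ = 0)
    (hθhigh : ∀ i ∈ Finset.Icc 1 e₀, ∀ μ, d (i - 1) < μ → μ ≤ d i →
      ∀ ρ, r i ≤ ρ → ρ ≤ e → θ μ ρ = p * θ μ (ρ - 1) + (p - 1)) :
    (∀ ρ ∈ Finset.Icc 1 e, ∀ i ∈ Finset.Icc 1 e₀, r i ≤ ρ → ρ < r (i + 1) →
      ∀ μ ∈ Finset.Icc 1 N, (θ μ ρ ≠ 0 ↔ μ ≤ d i)) ∧
    (∀ ρ ∈ Finset.Icc 1 e, ρ < r 1 →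
      ∀ μ ∈ Finset.Icc 1 N, (θ μ ρ ≠ 0 ↔ μ = 1)) := by
  have hrow₁ : ∀ ρ ∈ Icc 1 e, θ 1 ρ ≠ 0 := fun ρ hρ => by
    have h1 : 1 ∈ Icc 1 e := mem_Icc.mpr ⟨le_rfl, (mem_Icc.mp hρ).1.trans (mem_Icc.mp hρ).2⟩
    have hε₁ := pos_of_eq_mul_add_of_lt_iff_not_dvd hu0 (hupos 1 h1) (hult 1 h1) (hqε 1 h1)
    exact (pos_of_eq_mul_pred_add hp.pos hε₁ hθ1 ρ hρ).ne'
  have hdmono := monotoneOn_Iic_of_eq_pred_add hd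
  have hsupp : ∀ ρ, (ρ ∈ Icc 1 e ∧ q ρ ≠ 0) ↔ ∃ i ∈ Icc 1 e₀, r i = ρ := by
    simpa only [Nat.pos_iff_ne_zero] using hress
  have hdN : d e₀ = N := by
    rw [eq_add_sum_Icc_of_eq_pred_add hd e₀ le_rfl, hd0, hN,
      sum_comp_eq_sum_of_injOn_of_support (coe_Icc 1 e₀ ▸ hrmono.injOn) hsupp]
  have hblock : ∀ μ ∈ Icc 1 N, μ ≠ 1 → ∃ j ∈ Icc 1 e₀, d (j - 1) < μ ∧ μ ≤ d j ∧
      ∀ ρ ∈ Icc 1 e, (θ μ ρ ≠ 0 ↔ r j ≤ ρ) := by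
    intro μ hμ hμ1
    obtain ⟨j, hj, hdj, hjd⟩ := exists_mem_Icc_pred_lt_le (d := d) (x := μ)
      (hd0 ▸ (mem_Icc.mp hμ).1.lt_of_ne' hμ1) (hdN ▸ (mem_Icc.mp hμ).2)
    exact ⟨j, hj, hdj, hjd, fun ρ hρ => ne_zero_iff_le_of_eq_zero_of_eq_mul_pred_add
      hp.one_lt (hθlow j hj μ hdj hjd) (hθhigh j hj μ hdj hjd) hρ⟩
  refine ⟨fun ρ hρ i hi hiρ hρi μ hμ => ?_, fun ρ hρ hρr μ hμ => ?_⟩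
  · obtain rfl | hμ1 := eq_or_ne μ 1
    · simpa [hrow₁ ρ hρ] using hd0 ▸ hdmono (Set.mem_Iic.mpr (Nat.zero_le _))
        (Set.mem_Iic.mpr (mem_Icc.mp hi).2) (Nat.zero_le i)
    · obtain ⟨j, hj, hdj, hjd, hθμ⟩ := hblock μ hμ hμ1
      rw [hθμ ρ hρ, hrmono.monotoneOn.le_iff_le_of_le_of_lt (by simpa using hi)
        (by simpa using hj) hiρ hρi, hdmono.le_iff_le_of_pred_lt_of_le (mem_Icc.mp hi).2
        (mem_Icc.mp hj).2 hdj hjd]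
  · obtain rfl | hμ1 := eq_or_ne μ 1
    · simpa using hrow₁ ρ hρ
    · obtain ⟨j, hj, -, -, hθμ⟩ := hblock μ hμ hμ1
      have hj' : j ∈ Set.Icc 1 e₀ := by simpa using hj
      simpa [hθμ ρ hρ, hμ1] using hρr.trans_le
        (hrmono.monotoneOn ⟨le_rfl, hj'.1.trans hj'.2⟩ hj' hj'.1)

/-- **Support of the matrix `θ`.** Suppose `e₀ > 0`.  If `1 ≤ ρ ≤ e` and `i` with
`1 ≤ i ≤ e₀` satisfies `r i ≤ ρ < r (i+1)`, then for `1 ≤ μ ≤ N`: `θ μ ρ ≠ 0 ↔ μ ≤ d i`.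
Moreover, for `ρ < r 1` one has `θ μ ρ ≠ 0 ↔ μ = 1`. -/
theorem theta_support
    (p e e₀ N : ℕ) (hp : p.Prime) (he : 1 ≤ e)
    (u q ε r d : ℕ → ℕ) (θ : ℕ → ℕ → ℕ)
    (hu0 : u 0 = 0)
    (hupos : ∀ ρ ∈ Finset.Icc 1 e, 1 ≤ u ρ)
    (hule : ∀ ρ ∈ Finset.Icc 1 e, p * u (ρ - 1) ≤ u ρ)
    (hult : ∀ ρ ∈ Finset.Icc 1 e, (p * u (ρ - 1) < u ρ ↔ ¬ p ∣ u ρ))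
    (hqε : ∀ ρ ∈ Finset.Icc 1 e, u ρ = p * u (ρ - 1) + p * q ρ + ε ρ)
    (hε : ∀ ρ ∈ Finset.Icc 1 e, ε ρ < p)
    (hrmono : StrictMonoOn r (Set.Icc 1 e₀))
    (hress : ∀ ρ, (ρ ∈ Finset.Icc 1 e ∧ 0 < q ρ) ↔ ∃ i ∈ Finset.Icc 1 e₀, r i = ρ)
    (hrtop : r (e₀ + 1) = e + 1)
    (hd0 : d 0 = 1)
    (hd : ∀ i ∈ Finset.Icc 1 e₀, d i = d (i - 1) + q (r i))
    (hN : N = 1 + ∑ ρ ∈ Finset.Icc 1 e, q ρ)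
    (hθ0 : ∀ μ ∈ Finset.Icc 1 N, θ μ 0 = 0)
    (hθ1 : ∀ ρ ∈ Finset.Icc 1 e, θ 1 ρ = p * θ 1 (ρ - 1) + ε ρ)
    (hθlow : ∀ i ∈ Finset.Icc 1 e₀, ∀ μ, d (i - 1) < μ → μ ≤ d i →
      ∀ ρ, 1 ≤ ρ → ρ < r i → θ μ ρ = 0)
    (hθhigh : ∀ i ∈ Finset.Icc 1 e₀, ∀ μ, d (i - 1) < μ → μ ≤ d i →
      ∀ ρ, r i ≤ ρ → ρ ≤ e → θ μ ρ = p * θ μ (ρ - 1) + (p - 1))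
    (he₀ : 0 < e₀) :
    (∀ ρ ∈ Finset.Icc 1 e, ∀ i ∈ Finset.Icc 1 e₀, r i ≤ ρ → ρ < r (i + 1) →
      ∀ μ ∈ Finset.Icc 1 N, (θ μ ρ ≠ 0 ↔ μ ≤ d i)) ∧
    (∀ ρ ∈ Finset.Icc 1 e, ρ < r 1 →
      ∀ μ ∈ Finset.Icc 1 N, (θ μ ρ ≠ 0 ↔ μ = 1)) :=
  theta_support_general p e e₀ N hp u q ε r d θ hu0 hupos hult hqε hrmono hress hd0 hd hN hθ1 hθlow
    hθhigh
end

section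
/- (Equality of different degrees in the deformation.) In the setting of the jump data and the matrix θ, the following identity of non-negative integers holds: Σ_{ρ=1}^{e} (θ_{1,ρ} + 1)(p^ρ − p^{ρ−1}) + Σ_{i=1}^{e₀} Σ_{μ=d_{i−1}+1}^{d_i} Σ_{ρ=r_i}^{e} (θ_{μ,ρ} + 1)(p^ρ − p^{ρ−1}) = Σ_{ρ=1}^{e} (ı_ρ + 1)(p^ρ − p^{ρ−1}). -/
/-!
Unrolling the recurrences gives `u ρ = θ 1 ρ + ∑_{σ ≤ ρ} q σ * p ^ (ρ + 1 - σ)`, while each of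
the `q (r i)` rows `μ` of the `i`-th block satisfies `θ μ ρ + 1 = p ^ (ρ + 1 - r i)` for
`ρ ≥ r i`. Substituting both and exchanging the order of summation on the right, the two sides
agree, because the essential indices `r i` are exactly the `σ` with `q σ ≠ 0`.
-/

open Finset

theorem sum_Icc_Icc_comm {M : Type*} [AddCommMonoid M] (a b : ℕ) (f : ℕ → ℕ → M) :
    ∑ j ∈ Icc a b, ∑ i ∈ Icc a j, f i j = ∑ i ∈ Icc a b, ∑ j ∈ Icc i b, f i j := by
  simpa only [Ico_add_one_right_eq_Icc] using (sum_Ico_Ico_comm a (b + 1) f).symm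

theorem eq_add_sum_Icc_of_eq_add {d g : ℕ → ℕ} {n : ℕ}
    (h : ∀ i ∈ Icc 1 n, d i = d (i - 1) + g i) :
    ∀ i ≤ n, d i = d 0 + ∑ j ∈ Icc 1 i, g j := by
  intro i hi
  induction i with
  | zero => simp
  | succ i ih =>
    rw [h (i + 1) (mem_Icc.2 ⟨by omega, hi⟩), Nat.add_sub_cancel, ih (by omega),
      sum_Icc_succ_top (by omega), add_assoc]

theorem le_add_sum_Icc_of_eq_add {d g : ℕ → ℕ} {n : ℕ}
    (h : ∀ i ∈ Icc 1 n, d i = d (i - 1) + g i) :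
    ∀ i ≤ n, d i ≤ d 0 + ∑ j ∈ Icc 1 n, g j := fun i hi => by
  rw [eq_add_sum_Icc_of_eq_add h i hi]
  exact Nat.add_le_add_left (sum_le_sum_of_subset (Icc_subset_Icc_right hi)) _

theorem eq_add_sum_mul_pow_of_eq_add {p n : ℕ} {u t q ε : ℕ → ℕ} (hu0 : u 0 = 0) (ht0 : t 0 = 0)
    (hu : ∀ ρ ∈ Icc 1 n, u ρ = p * u (ρ - 1) + p * q ρ + ε ρ)
    (ht : ∀ ρ ∈ Icc 1 n, t ρ = p * t (ρ - 1) + ε ρ) :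
    u n = t n + ∑ σ ∈ Icc 1 n, q σ * p ^ (n + 1 - σ) := by
  induction n with
  | zero => simp [hu0, ht0]
  | succ n ih =>
    have hn : n + 1 ∈ Icc 1 (n + 1) := mem_Icc.2 ⟨by omega, le_rfl⟩
    have hmono : Icc 1 n ⊆ Icc 1 (n + 1) := Icc_subset_Icc_right n.le_succ
    have hpow : ∀ σ ∈ Icc 1 n, q σ * p ^ (n + 1 + 1 - σ) = p * (q σ * p ^ (n + 1 - σ)) := by
      intro σ hσ
      rw [show n + 1 + 1 - σ = n + 1 - σ + 1 by grind, pow_succ]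
      ring
    rw [hu _ hn, ht _ hn, Nat.add_sub_cancel, ih (fun ρ hρ => hu ρ (hmono hρ))
      (fun ρ hρ => ht ρ (hmono hρ)), sum_Icc_succ_top (by omega), sum_congr rfl hpow,
      ← mul_sum, Nat.add_sub_cancel_left, pow_one]
    ring

theorem add_one_eq_pow_of_eq_mul_add {p r e : ℕ} {f : ℕ → ℕ} (hp : 1 ≤ p) (hr : 1 ≤ r)
    (h0 : f 0 = 0) (hlow : ∀ ρ, 1 ≤ ρ → ρ < r → f ρ = 0)
    (hrec : ∀ ρ, r ≤ ρ → ρ ≤ e → f ρ = p * f (ρ - 1) + (p - 1)) :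
    ∀ ρ ∈ Icc r e, f ρ + 1 = p ^ (ρ + 1 - r) := by
  have hstart : f (r - 1) = 0 := by
    rcases Nat.lt_or_ge 1 r with h | h
    · exact hlow _ (by omega) (by omega)
    · rwa [show r - 1 = 0 by omega]
  intro ρ hρ
  obtain ⟨hrρ, hρe⟩ := mem_Icc.1 hρ
  induction ρ, hrρ using Nat.le_induction with
  | base =>
    rw [hrec r le_rfl hρe, hstart, Nat.add_sub_cancel_left, pow_one]
    omega
  | succ ρ hrρ ih =>
    rw [hrec (ρ + 1) (by omega) hρe, Nat.add_sub_cancel, show ρ + 1 + 1 - r = ρ + 1 - r + 1 by omega,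
      pow_succ, ← ih (mem_Icc.2 ⟨hrρ, by omega⟩) (by omega)]
    zify [hp]
    ring

theorem sum_comp_eq_sum_of_essential {M : Type*} [AddCommMonoid M] {q r : ℕ → ℕ} {f : ℕ → M}
    {e e₀ : ℕ} (hr : Set.InjOn r (Set.Icc 1 e₀))
    (hess : ∀ ρ, (ρ ∈ Icc 1 e ∧ 0 < q ρ) ↔ ∃ i ∈ Icc 1 e₀, r i = ρ)
    (hf : ∀ σ, q σ = 0 → f σ = 0) :
    ∑ i ∈ Icc 1 e₀, f (r i) = ∑ σ ∈ Icc 1 e, f σ := by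
  classical
  rw [← sum_image (by simpa using hr)]
  refine sum_subset (fun σ hσ => ?_) (fun σ hσ hσr => hf σ ?_)
  · obtain ⟨i, hi, rfl⟩ := mem_image.1 hσ
    exact ((hess _).2 ⟨i, hi, rfl⟩).1
  · by_contra hq
    obtain ⟨i, hi, rfl⟩ := (hess σ).1 ⟨hσ, Nat.pos_of_ne_zero hq⟩
    exact hσr (mem_image_of_mem r hi)

theorem sum_add_one_mul_eq_of_eq_add_sum {t u q w : ℕ → ℕ} {c : ℕ → ℕ → ℕ} {e : ℕ}
    (hu : ∀ ρ ∈ Icc 1 e, u ρ = t ρ + ∑ σ ∈ Icc 1 ρ, q σ * c σ ρ) :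
    ∑ ρ ∈ Icc 1 e, (u ρ + 1) * w ρ
      = ∑ ρ ∈ Icc 1 e, (t ρ + 1) * w ρ + ∑ σ ∈ Icc 1 e, q σ * ∑ ρ ∈ Icc σ e, c σ ρ * w ρ := by
  simp_rw [mul_sum]
  rw [← sum_Icc_Icc_comm, ← sum_add_distrib]
  refine sum_congr rfl fun ρ hρ => ?_
  rw [hu ρ hρ, add_right_comm, add_mul (t ρ + 1), sum_mul]
  simp_rw [mul_assoc]

theorem different_degrees_equal_general
    (p e e₀ N : ℕ) (hp : p.Prime)
    (u q ε r d : ℕ → ℕ) (θ : ℕ → ℕ → ℕ)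
    (hu0 : u 0 = 0)
    (hqε : ∀ ρ ∈ Finset.Icc 1 e, u ρ = p * u (ρ - 1) + p * q ρ + ε ρ)
    (hrmono : StrictMonoOn r (Set.Icc 1 e₀))
    (hress : ∀ ρ, (ρ ∈ Finset.Icc 1 e ∧ 0 < q ρ) ↔ ∃ i ∈ Finset.Icc 1 e₀, r i = ρ)
    (hd0 : d 0 = 1)
    (hd : ∀ i ∈ Finset.Icc 1 e₀, d i = d (i - 1) + q (r i))
    (hN : N = 1 + ∑ ρ ∈ Finset.Icc 1 e, q ρ)
    (hθ0 : ∀ μ ∈ Finset.Icc 1 N, θ μ 0 = 0)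
    (hθ1 : ∀ ρ ∈ Finset.Icc 1 e, θ 1 ρ = p * θ 1 (ρ - 1) + ε ρ)
    (hθlow : ∀ i ∈ Finset.Icc 1 e₀, ∀ μ, d (i - 1) < μ → μ ≤ d i →
      ∀ ρ, 1 ≤ ρ → ρ < r i → θ μ ρ = 0)
    (hθhigh : ∀ i ∈ Finset.Icc 1 e₀, ∀ μ, d (i - 1) < μ → μ ≤ d i →
      ∀ ρ, r i ≤ ρ → ρ ≤ e → θ μ ρ = p * θ μ (ρ - 1) + (p - 1)) :
    ∑ ρ ∈ Finset.Icc 1 e, (θ 1 ρ + 1) * (p ^ ρ - p ^ (ρ - 1))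
      + ∑ i ∈ Finset.Icc 1 e₀, ∑ μ ∈ Finset.Icc (d (i - 1) + 1) (d i),
          ∑ ρ ∈ Finset.Icc (r i) e, (θ μ ρ + 1) * (p ^ ρ - p ^ (ρ - 1))
      = ∑ ρ ∈ Finset.Icc 1 e, (u ρ + 1) * (p ^ ρ - p ^ (ρ - 1)) := by
  have hr : ∀ i ∈ Icc 1 e₀, 1 ≤ r i := fun i hi => (mem_Icc.1 ((hress _).2 ⟨i, hi, rfl⟩).1).1
  have hdN : ∀ i ∈ Icc 1 e₀, d i ≤ N := fun i hi => by
    have := le_add_sum_Icc_of_eq_add hd i (mem_Icc.1 hi).2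
    rwa [hd0, sum_comp_eq_sum_of_essential hrmono.injOn hress fun _ h => h, ← hN] at this
  have hrow : ∀ i ∈ Icc 1 e₀, ∀ μ ∈ Icc (d (i - 1) + 1) (d i), ∀ ρ ∈ Icc (r i) e,
      θ μ ρ + 1 = p ^ (ρ + 1 - r i) := fun i hi μ hμ => by
    obtain ⟨hμ1, hμ2⟩ := mem_Icc.1 hμ
    exact add_one_eq_pow_of_eq_mul_add hp.one_le (hr i hi)
      (hθ0 μ (mem_Icc.2 ⟨by omega, hμ2.trans (hdN i hi)⟩)) (hθlow i hi μ hμ1 hμ2)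
      (hθhigh i hi μ hμ1 hμ2)
  have hblock : ∀ i ∈ Icc 1 e₀, ∑ μ ∈ Icc (d (i - 1) + 1) (d i),
        ∑ ρ ∈ Icc (r i) e, (θ μ ρ + 1) * (p ^ ρ - p ^ (ρ - 1))
      = q (r i) * ∑ ρ ∈ Icc (r i) e, p ^ (ρ + 1 - r i) * (p ^ ρ - p ^ (ρ - 1)) := fun i hi => by
    rw [sum_const_nat fun μ hμ => sum_congr rfl fun ρ hρ => by rw [hrow i hi μ hμ ρ hρ],
      Nat.card_Icc, hd i hi, Nat.add_sub_add_right, Nat.add_sub_cancel_left]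
  have hu : ∀ ρ ∈ Icc 1 e, u ρ = θ 1 ρ + ∑ σ ∈ Icc 1 ρ, q σ * p ^ (ρ + 1 - σ) := fun ρ hρ =>
    eq_add_sum_mul_pow_of_eq_add hu0 (hθ0 1 (mem_Icc.2 ⟨le_rfl, by omega⟩))
      (fun σ hσ => hqε σ (Icc_subset_Icc_right (mem_Icc.1 hρ).2 hσ))
      (fun σ hσ => hθ1 σ (Icc_subset_Icc_right (mem_Icc.1 hρ).2 hσ))
  rw [sum_congr rfl hblock, sum_add_one_mul_eq_of_eq_add_sum hu,
    sum_comp_eq_sum_of_essential (f := fun σ => q σ * ∑ ρ ∈ Icc σ e, p ^ (ρ + 1 - σ) *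
      (p ^ ρ - p ^ (ρ - 1))) hrmono.injOn hress fun σ h => by rw [h, zero_mul]]

/-- **Equality of different degrees in the deformation.**
`∑_{ρ=1}^{e} (θ 1 ρ + 1)(p^ρ - p^(ρ-1))
 + ∑_{i=1}^{e₀} ∑_{μ=d(i-1)+1}^{d i} ∑_{ρ=r i}^{e} (θ μ ρ + 1)(p^ρ - p^(ρ-1))
 = ∑_{ρ=1}^{e} (u ρ + 1)(p^ρ - p^(ρ-1))`. -/
theorem different_degrees_equal
    (p e e₀ N : ℕ) (hp : p.Prime) (he : 1 ≤ e)
    (u q ε r d : ℕ → ℕ) (θ : ℕ → ℕ → ℕ)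
    (hu0 : u 0 = 0)
    (hupos : ∀ ρ ∈ Finset.Icc 1 e, 1 ≤ u ρ)
    (hule : ∀ ρ ∈ Finset.Icc 1 e, p * u (ρ - 1) ≤ u ρ)
    (hult : ∀ ρ ∈ Finset.Icc 1 e, (p * u (ρ - 1) < u ρ ↔ ¬ p ∣ u ρ))
    (hqε : ∀ ρ ∈ Finset.Icc 1 e, u ρ = p * u (ρ - 1) + p * q ρ + ε ρ)
    (hε : ∀ ρ ∈ Finset.Icc 1 e, ε ρ < p)
    (hrmono : StrictMonoOn r (Set.Icc 1 e₀))
    (hress : ∀ ρ, (ρ ∈ Finset.Icc 1 e ∧ 0 < q ρ) ↔ ∃ i ∈ Finset.Icc 1 e₀, r i = ρ)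
    (hrtop : r (e₀ + 1) = e + 1)
    (hd0 : d 0 = 1)
    (hd : ∀ i ∈ Finset.Icc 1 e₀, d i = d (i - 1) + q (r i))
    (hN : N = 1 + ∑ ρ ∈ Finset.Icc 1 e, q ρ)
    (hθ0 : ∀ μ ∈ Finset.Icc 1 N, θ μ 0 = 0)
    (hθ1 : ∀ ρ ∈ Finset.Icc 1 e, θ 1 ρ = p * θ 1 (ρ - 1) + ε ρ)
    (hθlow : ∀ i ∈ Finset.Icc 1 e₀, ∀ μ, d (i - 1) < μ → μ ≤ d i →
      ∀ ρ, 1 ≤ ρ → ρ < r i → θ μ ρ = 0)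
    (hθhigh : ∀ i ∈ Finset.Icc 1 e₀, ∀ μ, d (i - 1) < μ → μ ≤ d i →
      ∀ ρ, r i ≤ ρ → ρ ≤ e → θ μ ρ = p * θ μ (ρ - 1) + (p - 1)) :
    ∑ ρ ∈ Finset.Icc 1 e, (θ 1 ρ + 1) * (p ^ ρ - p ^ (ρ - 1))
      + ∑ i ∈ Finset.Icc 1 e₀, ∑ μ ∈ Finset.Icc (d (i - 1) + 1) (d i),
          ∑ ρ ∈ Finset.Icc (r i) e, (θ μ ρ + 1) * (p ^ ρ - p ^ (ρ - 1))
      = ∑ ρ ∈ Finset.Icc 1 e, (u ρ + 1) * (p ^ ρ - p ^ (ρ - 1)) :=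
  different_degrees_equal_general p e e₀ N hp u q ε r d θ hu0 hqε hrmono hress hd0 hd hN hθ0 hθ1
    hθlow hθhigh
end

section
/- (Remark on the Obus–Wewers condition: reformulation (*)'.) Let p be a prime and let u, r, η be integers with u ≥ p², r ≥ 1 and 1 ≤ η ≤ p − 1, and set δ := p·r − η (so δ ≥ 1). Then the following are equivalent: (a) there is no integer m satisfying both δ < p·m and p·m·(δ + (p−1)·u) ≤ δ·(δ + p·u); (b) r ≤ η. -/
/-!
Since `0 < η < p`, the condition `δ < p m` just says `m ≥ r`, and the second condition is
monotone in `m`, so (a) fails exactly when `m = r` satisfies it. Writing `p r = δ + η`, that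
comparison becomes `δ u < η (δ + (p - 1) u)`, i.e. `δ (u - η) < η (p - 1) u`. For `r ≤ η` we have
`δ ≤ η (p - 1)`, which gives it; for `r > η` we have `δ ≥ η (p - 1) + p`, and `u ≥ p²` makes
`p u` outweigh the loss `η² (p - 1) + p η`.
-/

namespace ObusWewers

lemma mul_sub_lt_mul_iff_le {p r m η : ℤ} (hη0 : 0 < η) (hηp : η < p) :
    p * r - η < p * m ↔ r ≤ m := by
  constructor
  · intro h
    by_contra! hmr
    nlinarith [mul_le_mul_of_nonneg_left (Int.le_sub_one_of_lt hmr) (by omega : (0 : ℤ) ≤ p)]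
  · intro hrm
    nlinarith [mul_le_mul_of_nonneg_left hrm (by omega : (0 : ℤ) ≤ p)]

lemma exists_ge_mul_le_iff {c b r : ℤ} (hc : 0 ≤ c) :
    (∃ m, r ≤ m ∧ c * m ≤ b) ↔ c * r ≤ b :=
  ⟨fun ⟨_, hrm, hm⟩ => (mul_le_mul_of_nonneg_left hrm hc).trans hm, fun h => ⟨r, le_rfl, h⟩⟩

lemma mul_sub_mul_lt_iff (p r η u : ℤ) :
    (p * r - η) * ((p * r - η) + p * u) < p * r * ((p * r - η) + (p - 1) * u) ↔
      (p * r - η) * u < η * ((p * r - η) + (p - 1) * u) := by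
  constructor <;> intro h <;> linarith

lemma mul_lt_mul_add_iff_le {p r η u : ℤ} (hu : p ^ 2 ≤ u) (hη1 : 1 ≤ η) (hη2 : η ≤ p - 1) :
    (p * r - η) * u < η * ((p * r - η) + (p - 1) * u) ↔ r ≤ η := by
  have h_rearrange : (p * r - η) * u < η * ((p * r - η) + (p - 1) * u) ↔
      (p * r - η) * (u - η) < η * (p - 1) * u := by
    constructor <;> intro h <;> linarith
  rw [h_rearrange]
  constructor
  · intro h
    by_contra! hηr
    have hδ_ge : η * (p - 1) + p ≤ p * r - η := by nlinarith
    have hpu : η ^ 2 * (p - 1) + p * η < p * u := by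
      have hη_sq : η ^ 2 ≤ (p - 1) ^ 2 := pow_le_pow_left₀ (by omega) hη2 2
      nlinarith [mul_le_mul_of_nonneg_right hη_sq (by omega : (0 : ℤ) ≤ p - 1),
        mul_le_mul_of_nonneg_left hη2 (by omega : (0 : ℤ) ≤ p),
        mul_le_mul_of_nonneg_left hu (by omega : (0 : ℤ) ≤ p)]
    nlinarith [mul_le_mul_of_nonneg_right hδ_ge (by nlinarith : (0 : ℤ) ≤ u - η)]
  · intro hrη
    have hδ_le : p * r - η ≤ η * (p - 1) := by nlinarith
    nlinarith [mul_le_mul_of_nonneg_right hδ_le (by nlinarith : (0 : ℤ) ≤ u - η),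
      mul_pos (mul_pos (by omega : (0 : ℤ) < η) (by omega : (0 : ℤ) < p - 1)) (by omega : (0 : ℤ) < η)]

end ObusWewers

open ObusWewers in
theorem obus_wewers_reformulation_general (p : ℕ) (u r η : ℤ)
    (hu : (p : ℤ) ^ 2 ≤ u) (hr : 1 ≤ r) (hη1 : 1 ≤ η) (hη2 : η ≤ (p : ℤ) - 1) :
    (¬ ∃ m : ℤ, (p : ℤ) * r - η < (p : ℤ) * m ∧
        (p : ℤ) * m * (((p : ℤ) * r - η) + ((p : ℤ) - 1) * u)
          ≤ ((p : ℤ) * r - η) * (((p : ℤ) * r - η) + (p : ℤ) * u))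
      ↔ r ≤ η := by
  have hcoeff : 0 ≤ (p : ℤ) * (((p : ℤ) * r - η) + ((p : ℤ) - 1) * u) := by
    have hδ : 0 ≤ (p : ℤ) * r - η := by nlinarith
    have hu0 : 0 ≤ u := le_trans (sq_nonneg _) hu
    exact mul_nonneg (by omega) (add_nonneg hδ (mul_nonneg (by omega) hu0))
  simp only [mul_sub_lt_mul_iff_le (by omega) (by omega : η < p), mul_right_comm (p : ℤ) _ (_ + _)]
  rw [exists_ge_mul_le_iff hcoeff, not_le, mul_right_comm, mul_sub_mul_lt_iff,
    mul_lt_mul_add_iff_le hu hη1 hη2]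

/-- **Reformulation (*)' of the Obus–Wewers condition.** Let `p` be a prime and `u, r, η`
integers with `u ≥ p²`, `r ≥ 1`, `1 ≤ η ≤ p - 1`, and set `δ := p*r - η` (so `δ ≥ 1`).
Then the following are equivalent: (a) there is no integer `m` with `δ < p*m` and
`p*m*(δ + (p-1)*u) ≤ δ*(δ + p*u)`; (b) `r ≤ η`. -/
theorem obus_wewers_reformulation (p : ℕ) (hp : p.Prime) (u r η : ℤ)
    (hu : (p : ℤ) ^ 2 ≤ u) (hr : 1 ≤ r) (hη1 : 1 ≤ η) (hη2 : η ≤ (p : ℤ) - 1) :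
    (¬ ∃ m : ℤ, (p : ℤ) * r - η < (p : ℤ) * m ∧
        (p : ℤ) * m * (((p : ℤ) * r - η) + ((p : ℤ) - 1) * u)
          ≤ ((p : ℤ) * r - η) * (((p : ℤ) * r - η) + (p : ℤ) * u))
      ↔ r ≤ η :=
  obus_wewers_reformulation_general p u r η hu hr hη1 hη2
end
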